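/- arXiv:0706.0358 — 2 statements merged into one kernel-verified Lean document; each statement's English description precedes it below -/
import Mathlib

section
/- Let G be an infinite unimodular transitive graph. For m ≥ 1, let ρ(m) be the smallest radius of a ball in G containing at least m vertices. Then for every finite nonempty vertex set K, |∂_V^{int} K| / |K| ≥ 1 / (2 ρ(2|K|)), where ∂_V^{int} K = {x ∈ K : there exists y ∉ K with y ~ x} is the internal vertex boundary. -/
open scoped BigOperators ENNReal

attribute [local instance] Classical.propDecidable

noncomputable section

variable {V : Type*}

/-- The ball of radius `r` about `x` in graph distance. -/
def gBall (G : SimpleGraph V) (x : V) (r : ℕ) : Set V := {y | G.dist x y ≤ r}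

/-- `ρ(m)`: the smallest radius of a ball in `G` containing at least `m` vertices. -/
def smallestBallRadius (G : SimpleGraph V) (m : ℕ) : ℕ :=
  sInf {r : ℕ | ∃ x : V, m ≤ (gBall G x r).ncard}

/-- The internal vertex boundary of a finite set `K`. -/
def intVertexBdry (G : SimpleGraph V) (K : Finset V) : Finset V :=
  K.filter fun x => ∃ y, y ∉ K ∧ G.Adj x y

/-!
Mass transport along geodesics. Put `r = ρ(2|K|)`; by transitivity all `r`-balls have the same
finite size `b ≥ 2|K|`. Every vertex `x` sends to each `y` of its `r`-ball one unit of mass, spread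
uniformly over the geodesics from `x` to `y` and dropped on each of their vertices other than `y`,
so `x` sends out at most `r b`. For `x ∈ K` at least `b / 2` of these `y` lie outside `K`, and every
geodesic towards them leaves `K` through `∂K`; so `∂K` receives at least `b / 2` from each `x ∈ K`.
By the Mass-Transport Principle what `∂K` receives is at most what it sends:
`|K| b / 2 ≤ |∂K| r b`.
-/

lemma ENNReal.tsum_ite_mem_eq_encard {α : Type*} (s : Set α) [DecidablePred (· ∈ s)] :
    ∑' a, (if a ∈ s then (1 : ℝ≥0∞) else 0) = s.encard := by
  rw [← ENNReal.tsum_set_one, tsum_subtype s fun _ => (1 : ℝ≥0∞)]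
  exact tsum_congr fun a => by simp [Set.indicator_apply]

namespace SimpleGraph

variable {V' : Type*} {G : SimpleGraph V} {G' : SimpleGraph V'}

theorem edist_map_le (f : G →g G') (u v : V) : G'.edist (f u) (f v) ≤ G.edist u v :=
  le_iInf fun p => by simpa using edist_le (p.map f)

theorem Iso.edist_eq (g : G ≃g G') (u v : V) : G'.edist (g u) (g v) = G.edist u v :=
  le_antisymm (edist_map_le g.toHom u v) (by simpa using edist_map_le g.symm.toHom (g u) (g v))

theorem Iso.dist_eq (g : G ≃g G') (u v : V) : G'.dist (g u) (g v) = G.dist u v := by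
  rw [dist, dist, g.edist_eq]

theorem Iso.apply_mem_gBall_iff (g : G ≃g G') {x y : V} {r : ℕ} :
    g y ∈ gBall G' (g x) r ↔ y ∈ gBall G x r := by
  simp only [gBall, Set.mem_ofPred_eq, g.dist_eq]

theorem Iso.image_gBall (g : G ≃g G') (x : V) (r : ℕ) :
    g '' gBall G x r = gBall G' (g x) r := by
  ext y
  obtain ⟨y, rfl⟩ := g.surjective y
  rw [g.injective.mem_set_image, g.apply_mem_gBall_iff]

theorem neighborSet_subset_gBall {r : ℕ} (hr : 1 ≤ r) (v : V) : G.neighborSet v ⊆ gBall G v r :=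
  fun _ hw => (dist_eq_one_iff_adj.2 hw).trans_le hr

theorem Walk.exists_mem_support_dropLast_intVertexBdry {K : Finset V} {x y : V} (p : G.Walk x y)
    (hx : x ∈ K) (hy : y ∉ K) : ∃ z ∈ p.support.dropLast, z ∈ intVertexBdry G K := by
  obtain ⟨d, hd, hd₁, hd₂⟩ := p.exists_boundary_dart K hx hy
  refine ⟨d.fst, ?_, Finset.mem_filter.2 ⟨hd₁, d.snd, hd₂, d.adj⟩⟩
  rw [← p.map_fst_darts]
  exact List.mem_map_of_mem hd

theorem Walk.tsum_mem_support_dropLast_le_length {x y : V} (p : G.Walk x y) :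
    ∑' z, (if z ∈ p.support.dropLast then (1 : ℝ≥0∞) else 0) ≤ p.length := by
  have h := ENNReal.tsum_ite_mem_eq_encard (p.support.dropLast.toFinset : Set V)
  simp only [Finset.mem_coe, List.mem_toFinset, Set.encard_coe_eq_coe_finsetCard] at h
  rw [h]
  have := p.support.dropLast.toFinset_card_le
  simp only [List.length_dropLast, length_support, add_tsub_cancel_right] at this
  exact_mod_cast this

def geodesicCount (G : SimpleGraph V) (x y : V) : ℝ≥0∞ :=
  ∑' p : G.Walk x y, if p.length = G.dist x y then 1 else 0

def geodesicVisitCount (G : SimpleGraph V) (x y z : V) : ℝ≥0∞ :=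
  ∑' p : G.Walk x y, if p.length = G.dist x y ∧ z ∈ p.support.dropLast then 1 else 0

def geodesicTransport (G : SimpleGraph V) (r : ℕ) (x z : V) : ℝ≥0∞ :=
  ∑' y, if y ∈ gBall G x r then G.geodesicVisitCount x y z / G.geodesicCount x y else 0

theorem Iso.geodesicCount_le (g : G ≃g G') (x y : V) :
    G.geodesicCount x y ≤ G'.geodesicCount (g x) (g y) := by
  have := ENNReal.tsum_comp_le_tsum_of_injective
    (Walk.map_injective_of_injective (f := g.toHom) g.injective x y)
    fun q => if q.length = G'.dist (g x) (g y) then (1 : ℝ≥0∞) else 0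
  simpa [geodesicCount, g.dist_eq] using this

theorem Iso.geodesicCount_eq (g : G ≃g G') (x y : V) :
    G'.geodesicCount (g x) (g y) = G.geodesicCount x y :=
  le_antisymm (by simpa using g.symm.geodesicCount_le (g x) (g y)) (g.geodesicCount_le x y)

theorem Iso.geodesicVisitCount_le (g : G ≃g G') (x y z : V) :
    G.geodesicVisitCount x y z ≤ G'.geodesicVisitCount (g x) (g y) (g z) := by
  have := ENNReal.tsum_comp_le_tsum_of_injective
    (Walk.map_injective_of_injective (f := g.toHom) g.injective x y)
    fun q => if q.length = G'.dist (g x) (g y) ∧ g z ∈ q.support.dropLast then (1 : ℝ≥0∞) else 0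
  simpa [geodesicVisitCount, g.dist_eq, ← List.map_dropLast,
    List.mem_map_of_injective g.injective] using this

theorem Iso.geodesicVisitCount_eq (g : G ≃g G') (x y z : V) :
    G'.geodesicVisitCount (g x) (g y) (g z) = G.geodesicVisitCount x y z :=
  le_antisymm (by simpa using g.symm.geodesicVisitCount_le (g x) (g y) (g z))
    (g.geodesicVisitCount_le x y z)

theorem Iso.geodesicTransport_eq (g : G ≃g G') (r : ℕ) (x z : V) :
    G'.geodesicTransport r (g x) (g z) = G.geodesicTransport r x z := by
  rw [geodesicTransport, ← g.toEquiv.tsum_eq]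
  refine tsum_congr fun y => ?_
  rw [RelIso.coe_fn_toEquiv, g.geodesicVisitCount_eq, g.geodesicCount_eq]
  exact if_congr g.apply_mem_gBall_iff rfl rfl

theorem geodesicCount_ne_zero {x y : V} (h : G.Reachable x y) : G.geodesicCount x y ≠ 0 := by
  obtain ⟨p, hp⟩ := h.exists_walk_length_eq_dist
  refine (ENNReal.le_tsum p).trans_lt' ?_ |>.ne'
  simp [hp]

theorem geodesicCount_ne_top [G.LocallyFinite] (x y : V) : G.geodesicCount x y ≠ ⊤ := by
  have h := ENNReal.tsum_ite_mem_eq_encard {p : G.Walk x y | p.length = G.dist x y}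
  simp only [Set.mem_ofPred_eq] at h
  rw [geodesicCount, h]
  exact ENat.toENNReal_ne_top.2 (Set.toFinite _).encard_lt_top.ne

theorem tsum_geodesicVisitCount_le (x y : V) :
    ∑' z, G.geodesicVisitCount x y z ≤ G.dist x y * G.geodesicCount x y := by
  calc ∑' z, G.geodesicVisitCount x y z
      = ∑' p : G.Walk x y, if p.length = G.dist x y then
          ∑' z, (if z ∈ p.support.dropLast then (1 : ℝ≥0∞) else 0) else 0 := by
        simp_rw [geodesicVisitCount]
        rw [ENNReal.tsum_comm]
        exact tsum_congr fun p => by split_ifs <;> simp [*]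
    _ ≤ ∑' p : G.Walk x y, if p.length = G.dist x y then (G.dist x y : ℝ≥0∞) else 0 :=
        ENNReal.tsum_le_tsum fun p => by
          split_ifs with hp
          · exact hp ▸ p.tsum_mem_support_dropLast_le_length
          · rfl
    _ = G.dist x y * G.geodesicCount x y := by
        rw [geodesicCount, ← ENNReal.tsum_mul_left]
        simp_rw [mul_ite, mul_one, mul_zero]

theorem geodesicCount_le_sum_geodesicVisitCount {K : Finset V} {x y : V} (hx : x ∈ K)
    (hy : y ∉ K) : G.geodesicCount x y ≤ ∑ z ∈ intVertexBdry G K, G.geodesicVisitCount x y z := by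
  simp_rw [geodesicVisitCount, ← Summable.tsum_finsetSum fun _ _ => ENNReal.summable]
  refine ENNReal.tsum_le_tsum fun p => ?_
  split_ifs with hp
  · obtain ⟨z, hzp, hzK⟩ := p.exists_mem_support_dropLast_intVertexBdry hx hy
    exact le_of_eq_of_le (by simp [hp, hzp]) (Finset.single_le_sum (fun _ _ => zero_le) hzK)
  · exact zero_le

theorem tsum_geodesicTransport_le (r : ℕ) (x : V) :
    ∑' z, G.geodesicTransport r x z ≤ r * (gBall G x r).encard := by
  calc ∑' z, G.geodesicTransport r x z
      = ∑' y, if y ∈ gBall G x r then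
          (∑' z, G.geodesicVisitCount x y z) / G.geodesicCount x y else 0 := by
        simp_rw [geodesicTransport]
        rw [ENNReal.tsum_comm]
        exact tsum_congr fun y => by split_ifs <;> simp [div_eq_mul_inv, ENNReal.tsum_mul_right]
    _ ≤ ∑' y, if y ∈ gBall G x r then (r : ℝ≥0∞) else 0 :=
        ENNReal.tsum_le_tsum fun y => by
          split_ifs with hy
          · exact ENNReal.div_le_of_le_mul <| (tsum_geodesicVisitCount_le x y).trans <|
              mul_le_mul_left (by exact_mod_cast hy) _
          · rfl
    _ = r * (gBall G x r).encard := by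
        rw [← ENNReal.tsum_ite_mem_eq_encard, ← ENNReal.tsum_mul_left]
        simp_rw [mul_ite, mul_one, mul_zero]

theorem encard_sdiff_le_sum_geodesicTransport [G.LocallyFinite] (hG : G.Connected)
    {K : Finset V} (r : ℕ) {x : V} (hx : x ∈ K) :
    (gBall G x r \ K).encard ≤ ∑ z ∈ intVertexBdry G K, G.geodesicTransport r x z := by
  rw [← ENNReal.tsum_ite_mem_eq_encard]
  simp_rw [geodesicTransport, ← Summable.tsum_finsetSum fun _ _ => ENNReal.summable]
  refine ENNReal.tsum_le_tsum fun y => ?_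
  by_cases hy : y ∈ gBall G x r \ K
  · rw [if_pos hy, Finset.sum_congr rfl fun z _ => if_pos hy.1]
    simp_rw [div_eq_mul_inv, ← Finset.sum_mul]
    rw [← ENNReal.div_self (geodesicCount_ne_zero (hG x y)) (geodesicCount_ne_top x y),
      div_eq_mul_inv]
    exact mul_le_mul_left (geodesicCount_le_sum_geodesicVisitCount hx hy.2) _
  · exact (if_neg hy).trans_le zero_le

def SatisfiesMassTransport (G : SimpleGraph V) : Prop :=
  ∀ F : V → V → ℝ≥0∞, (∀ (g : G ≃g G) (x y : V), F (g x) (g y) = F x y) →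
    ∀ o : V, ∑' x, F x o = ∑' y, F o y

theorem sum_encard_gBall_sdiff_le [G.LocallyFinite] (hMTP : G.SatisfiesMassTransport)
    (hG : G.Connected) (K : Finset V) (r : ℕ) :
    ∑ x ∈ K, ((gBall G x r \ K).encard : ℝ≥0∞) ≤
      ∑ z ∈ intVertexBdry G K, (r : ℝ≥0∞) * (gBall G z r).encard := by
  calc ∑ x ∈ K, ((gBall G x r \ K).encard : ℝ≥0∞)
      ≤ ∑ x ∈ K, ∑ z ∈ intVertexBdry G K, G.geodesicTransport r x z :=
        Finset.sum_le_sum fun x hx => encard_sdiff_le_sum_geodesicTransport hG r hx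
    _ = ∑ z ∈ intVertexBdry G K, ∑ x ∈ K, G.geodesicTransport r x z := Finset.sum_comm
    _ ≤ ∑ z ∈ intVertexBdry G K, ∑' x, G.geodesicTransport r x z :=
        Finset.sum_le_sum fun z _ => ENNReal.sum_le_tsum K
    _ = ∑ z ∈ intVertexBdry G K, ∑' y, G.geodesicTransport r z y :=
        Finset.sum_congr rfl fun z _ => hMTP _ (fun g => g.geodesicTransport_eq r) z
    _ ≤ ∑ z ∈ intVertexBdry G K, (r : ℝ≥0∞) * (gBall G z r).encard :=
        Finset.sum_le_sum fun z _ => tsum_geodesicTransport_le r z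

theorem card_le_two_mul_mul_card_intVertexBdry [G.LocallyFinite]
    (hMTP : G.SatisfiesMassTransport) (hG : G.Connected) {K : Finset V} {r b : ℕ}
    (hball : ∀ x, (gBall G x r).encard = b) (hKb : 2 * K.card ≤ b) :
    K.card ≤ 2 * r * (intVertexBdry G K).card := by
  obtain rfl | hb := eq_or_ne b 0
  · simp_all
  have hsdiff : ∀ x, (b : ℝ≥0∞) ≤ 2 * (gBall G x r \ K).encard := by
    intro x
    have h := Set.encard_le_encard_sdiff_add_encard (gBall G x r) K
    rw [hball x, Set.encard_coe_eq_coe_finsetCard] at h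
    generalize (gBall G x r \ K).encard = e at h ⊢
    induction e using ENat.recTopCoe with
    | top => simp
    | coe n =>
      have : b ≤ 2 * n := by
        have : b ≤ n + K.card := by exact_mod_cast h
        omega
      exact_mod_cast this
  have key : (K.card * b : ℝ≥0∞) ≤ 2 * r * (intVertexBdry G K).card * b :=
    calc (K.card * b : ℝ≥0∞) = ∑ x ∈ K, (b : ℝ≥0∞) := by simp
      _ ≤ ∑ x ∈ K, 2 * ((gBall G x r \ K).encard : ℝ≥0∞) := Finset.sum_le_sum fun x _ => hsdiff x
      _ = 2 * ∑ x ∈ K, ((gBall G x r \ K).encard : ℝ≥0∞) := (Finset.mul_sum ..).symm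
      _ ≤ 2 * ∑ z ∈ intVertexBdry G K, (r : ℝ≥0∞) * (gBall G z r).encard := by
          gcongr
          exact sum_encard_gBall_sdiff_le hMTP hG K r
      _ = 2 * r * (intVertexBdry G K).card * b := by simp [hball]; ring
  rw [ENNReal.mul_le_mul_iff_left (by exact_mod_cast hb) (ENNReal.natCast_ne_top b)] at key
  exact_mod_cast key

end SimpleGraph

theorem intBdry_card_div_card_ge_general
    (G : SimpleGraph V) (hG : G.Connected)
    (htrans : ∀ x y : V, ∃ g : G ≃g G, g x = y)
    (hMTP : ∀ F : V → V → ℝ≥0∞,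
      (∀ (g : G ≃g G) (x y : V), F (g x) (g y) = F x y) →
      ∀ o : V, ∑' x : V, F x o = ∑' y : V, F o y)
    (K : Finset V) :
    (1 : ℝ) / (2 * (smallestBallRadius G (2 * K.card) : ℝ))
      ≤ (intVertexBdry G K).card / K.card := by
  set ρ := smallestBallRadius G (2 * K.card)
  obtain hρ | hρ := Nat.eq_zero_or_pos ρ
  · -- `ρ = 0` also covers the junk value `sInf ∅ = 0`; either way the left side is `1 / 0 = 0`.
    rw [hρ]
    simp only [CharP.cast_eq_zero, mul_zero, div_zero]
    positivity
  obtain ⟨x₀, hx₀⟩ : ρ ∈ {r | ∃ x, 2 * K.card ≤ (gBall G x r).ncard} :=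
    Nat.sInf_mem (Nat.nonempty_of_pos_sInf hρ)
  have hK : 0 < K.card := Nat.pos_of_ne_zero fun h => Nat.notMem_of_lt_sInf hρ ⟨x₀, by simp [h]⟩
  have hfin : (gBall G x₀ ρ).Finite := Set.finite_of_ncard_pos (by omega)
  have hball : ∀ x, (gBall G x ρ).encard = (gBall G x₀ ρ).ncard := fun x => by
    obtain ⟨g, rfl⟩ := htrans x₀ x
    rw [← g.image_gBall, g.injective.encard_image, hfin.cast_ncard_eq]
  have : G.LocallyFinite := fun v => ((Set.finite_of_encard_eq_coe (hball v)).subset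
    (SimpleGraph.neighborSet_subset_gBall hρ v)).fintype
  have hcard := SimpleGraph.card_le_two_mul_mul_card_intVertexBdry hMTP hG hball hx₀
  rw [div_le_div_iff₀ (by positivity) (by exact_mod_cast hK), one_mul]
  exact_mod_cast hcard.trans_eq (by ring)

/-- in an infinite unimodular transitive graph (unimodularity is
taken in the form of the Mass-Transport Principle),
`|∂_V^{int} K| / |K| ≥ 1/(2 ρ(2|K|))` for every finite nonempty `K`. -/
theorem intBdry_card_div_card_ge
    [Infinite V] (G : SimpleGraph V) (hG : G.Connected)
    (htrans : ∀ x y : V, ∃ g : G ≃g G, g x = y)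
    (hMTP : ∀ F : V → V → ℝ≥0∞,
      (∀ (g : G ≃g G) (x y : V), F (g x) (g y) = F x y) →
      ∀ o : V, ∑' x : V, F x o = ∑' y : V, F o y)
    (K : Finset V) (hK : K.Nonempty) :
    (1 : ℝ) / (2 * (smallestBallRadius G (2 * K.card) : ℝ))
      ≤ (intVertexBdry G K).card / K.card :=
  intBdry_card_div_card_ge_general G hG htrans hMTP K

end
end

section
/- Let (G,c) be transient, exhausted by finite subgraphs G_n, with wired graphs G_n^W = G/(G∖G_n). Let g_{v,n} be the Green function for the random walk on G_n^W killed on leaving G_n, and g_v the Green function on G. Then the unit current flows θ_{v,n}, given by −∇g_{v,n} suitably normalized, converge in energy to θ_v, given by −∇g_v suitably normalized: E(θ_{v,n} − θ_v) → 0 as n → ∞. In particular, E(θ_v) = lim_n E(θ_{v,n}) and (θ_v, θ_u)_r = lim_n (θ_{v,n}, θ_{u,n})_r. -/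
open scoped BigOperators
open Filter

attribute [local instance] Classical.propDecidable

noncomputable section

variable {V : Type*}

/-- The (current) flow associated to a potential `f`: `c(e)` times the drop of
`f` along the edge. -/
def gradFlow (G : SimpleGraph V) (c : V → V → ℝ) (f : V → ℝ) : V → V → ℝ :=
  fun a b => if G.Adj a b then c a b * (f a - f b) else 0

/-- The energy `(θ,θ)_r` of an edge function (oriented edges, `r = 1/c`). -/
def energyR (G : SimpleGraph V) (c : V → V → ℝ) (θ : V → V → ℝ) : ℝ :=
  (1 / 2) * ∑' p : V × V, if G.Adj p.1 p.2 then θ p.1 p.2 ^ 2 / c p.1 p.2 else 0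

/-- The inner product `(θ,φ)_r`. -/
def innerR (G : SimpleGraph V) (c : V → V → ℝ) (θ φ : V → V → ℝ) : ℝ :=
  (1 / 2) * ∑' p : V × V, if G.Adj p.1 p.2 then θ p.1 p.2 * φ p.1 p.2 / c p.1 p.2 else 0

/-- A unit flow from `v` to infinity. -/
def IsUnitFlowToInfinity (G : SimpleGraph V) (v : V) (θ : V → V → ℝ) : Prop :=
  (∀ a b, θ a b = - θ b a) ∧ (∀ a b, ¬ G.Adj a b → θ a b = 0) ∧
  (∀ a, a ≠ v → HasSum (θ a) 0) ∧ HasSum (θ v) 1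

/-- A unit flow from `v` to the wired vertex of `G_n^W = G/(G∖G_n)`:
supported on edges meeting `Gn`, with divergence `0` at vertices of `Gn`
other than `v` and divergence `1` at `v`. -/
def IsWiredUnitFlow (G : SimpleGraph V) (Gn : Finset V) (v : V) (θ : V → V → ℝ) : Prop :=
  (∀ a b, θ a b = - θ b a) ∧ (∀ a b, ¬ G.Adj a b → θ a b = 0) ∧
  (∀ a b, a ∉ Gn → b ∉ Gn → θ a b = 0) ∧
  (∀ a ∈ Gn, a ≠ v → HasSum (θ a) 0) ∧ HasSum (θ v) 1

def eFun (G : SimpleGraph V) (c : V → V → ℝ) (θ : V → V → ℝ) : V × V → ℝ :=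
  fun p => if G.Adj p.1 p.2 then θ p.1 p.2 / Real.sqrt (c p.1 p.2) else 0

lemma eFun_sq (G : SimpleGraph V) (c : V → V → ℝ) (hc : ∀ a b, G.Adj a b → 0 < c a b)
    (θ : V → V → ℝ) (p : V × V) :
    (if G.Adj p.1 p.2 then θ p.1 p.2 ^ 2 / c p.1 p.2 else 0) = eFun G c θ p ^ 2 := by
  unfold eFun; split_ifs with h
  · rw [div_pow, Real.sq_sqrt (hc _ _ h).le]
  · simp

lemma eFun_mul (G : SimpleGraph V) (c : V → V → ℝ) (hc : ∀ a b, G.Adj a b → 0 < c a b)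
    (θ φ : V → V → ℝ) (p : V × V) :
    (if G.Adj p.1 p.2 then θ p.1 p.2 * φ p.1 p.2 / c p.1 p.2 else 0)
      = eFun G c θ p * eFun G c φ p := by
  unfold eFun; split_ifs with h
  · rw [div_mul_div_comm, Real.mul_self_sqrt (hc _ _ h).le]
  · simp

lemma energyR_eq (G : SimpleGraph V) (c : V → V → ℝ) (hc : ∀ a b, G.Adj a b → 0 < c a b)
    (θ : V → V → ℝ) : energyR G c θ = (1 / 2) * ∑' p : V × V, eFun G c θ p ^ 2 := by
  unfold energyR; rw [tsum_congr (eFun_sq G c hc θ)]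

lemma innerR_eq (G : SimpleGraph V) (c : V → V → ℝ) (hc : ∀ a b, G.Adj a b → 0 < c a b)
    (θ φ : V → V → ℝ) :
    innerR G c θ φ = (1 / 2) * ∑' p : V × V, eFun G c θ p * eFun G c φ p := by
  unfold innerR; rw [tsum_congr (eFun_mul G c hc θ φ)]

lemma eFun_sub (G : SimpleGraph V) (c : V → V → ℝ) (θ φ : V → V → ℝ) (p : V × V) :
    eFun G c (fun a b => θ a b - φ a b) p = eFun G c θ p - eFun G c φ p := by
  unfold eFun; split_ifs <;> ring

lemma eFun_lin (G : SimpleGraph V) (c : V → V → ℝ) (θ φ : V → V → ℝ) (t : ℝ) (p : V × V) :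
    eFun G c (fun a b => θ a b + t * (φ a b - θ a b)) p
      = eFun G c θ p + t * (eFun G c φ p - eFun G c θ p) := by
  unfold eFun; split_ifs <;> ring

lemma wired_support (G : SimpleGraph V) [G.LocallyFinite] (s : Finset V) (θ : V → V → ℝ)
    (h0 : ∀ a b, ¬ G.Adj a b → θ a b = 0) (h1 : ∀ a b, a ∉ s → b ∉ s → θ a b = 0) :
    ∃ t : Finset (V × V), ∀ p : V × V, p ∉ t → θ p.1 p.2 = 0 := by
  classical
  set T := s.biUnion (fun a => G.neighborFinset a) with hT
  refine ⟨s ×ˢ T ∪ T ×ˢ s, fun p hp => ?_⟩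
  by_cases hadj : G.Adj p.1 p.2
  · by_cases h1' : p.1 ∈ s
    · exact absurd (Finset.mem_union_left _ (Finset.mem_product.2
        ⟨h1', Finset.mem_biUnion.2 ⟨p.1, h1', (G.mem_neighborFinset _ _).2 hadj⟩⟩)) hp
    · by_cases h2' : p.2 ∈ s
      · exact absurd (Finset.mem_union_right _ (Finset.mem_product.2
          ⟨Finset.mem_biUnion.2 ⟨p.2, h2', (G.mem_neighborFinset _ _).2 hadj.symm⟩, h2'⟩)) hp
      · exact h1 _ _ h1' h2'
  · exact h0 _ _ hadj

lemma memℓp_of_sq_summable (f : V × V → ℝ) (h : Summable fun p => f p ^ 2) :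
    Memℓp f 2 := by
  apply memℓp_gen
  refine h.congr fun p => ?_
  rw [ENNReal.toReal_ofNat, show ((2:ℝ)) = ((2:ℕ):ℝ) by norm_num, Real.rpow_natCast]
  simp [Real.norm_eq_abs, sq_abs]

lemma lp_tsum_sq (F : lp (fun _ : V × V => ℝ) 2) : ∑' p, (F p)^2 = ‖F‖^2 := by
  rw [← real_inner_self_eq_norm_sq, lp.inner_eq_tsum]
  exact tsum_congr fun p => by simp [RCLike.inner_apply, sq]

lemma lp_tsum_mul (F Φ : lp (fun _ : V × V => ℝ) 2) : ∑' p, F p * Φ p = (inner ℝ F Φ : ℝ) := by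
  rw [lp.inner_eq_tsum]
  exact tsum_congr fun p => by simp [RCLike.inner_apply, mul_comm]

lemma lp_sq_summable (F : lp (fun _ : V × V => ℝ) 2) : Summable fun p => (F p)^2 := by
  have := lp.summable_inner (𝕜 := ℝ) F F
  exact this.congr fun p => by simp [RCLike.inner_apply, sq]

lemma key (G : SimpleGraph V) [G.LocallyFinite]
    (c : V → V → ℝ) (hc : ∀ a b, G.Adj a b → 0 < c a b)
    (Gn : ℕ → Finset V) (hmono : Monotone Gn)
    (hcover : (⋃ n, ((Gn n : Finset V) : Set V)) = Set.univ)
    (v : V) (gv : V → ℝ) (gvn : ℕ → V → ℝ)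
    (hgv : ∀ x, Tendsto (fun n => gvn n x) atTop (nhds (gv x)))
    (hθv : IsUnitFlowToInfinity G v (gradFlow G c gv))
    (hwv : ∀ n, IsWiredUnitFlow G (Gn n) v (gradFlow G c (gvn n)) ∧
      ∀ ψ, IsWiredUnitFlow G (Gn n) v ψ →
        energyR G c (gradFlow G c (gvn n)) ≤ energyR G c ψ)
    (Fn : ℕ → lp (fun _ : V × V => ℝ) 2) (Gv : lp (fun _ : V × V => ℝ) 2)
    (hFn : ∀ n p, Fn n p = eFun G c (gradFlow G c (gvn n)) p)
    (hGv : ∀ p, Gv p = eFun G c (gradFlow G c gv) p) :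
    Tendsto Fn atTop (nhds Gv) := by
  classical
  -- pointwise convergence
  have hpt : ∀ p : V × V, Tendsto (fun n => (Fn n : ∀ _ : V × V, ℝ) p) atTop (nhds (Gv p)) := by
    intro p
    simp only [hFn, hGv, eFun, gradFlow]
    by_cases h : G.Adj p.1 p.2
    · simp only [if_pos h]
      exact ((((hgv p.1).sub (hgv p.2)).const_mul _).div_const _)
    · simp only [if_neg h]; exact tendsto_const_nhds
  -- finite supports
  have hsupp : ∀ n, ∃ t : Finset (V × V),
      ∀ p : V × V, p ∉ t → (Fn n : ∀ _ : V × V, ℝ) p = 0 := by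
    intro n
    obtain ⟨t, ht⟩ := wired_support G (Gn n) (gradFlow G c (gvn n))
      (hwv n).1.2.1 (hwv n).1.2.2.1
    refine ⟨t, fun p hp => ?_⟩
    rw [hFn]; unfold eFun
    split_ifs with h
    · rw [ht p hp, zero_div]
    · rfl
  -- the key inner product identity
  have inner_eq : ∀ n, v ∈ Gn n → (inner ℝ (Fn n) Gv : ℝ) = ‖Fn n‖^2 := by
    intro n hv
    obtain ⟨⟨hanti, hadj0, hout, hdiv, hdivv⟩, hmin⟩ := hwv n
    set θn := gradFlow G c (gvn n) with hθn
    set θi := gradFlow G c gv with hθi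
    set ψ : V → V → ℝ := fun a b => if a ∈ Gn n ∨ b ∈ Gn n then θi a b else 0 with hψ
    obtain ⟨ianti, iadj0, idiv, idivv⟩ := hθv
    have hψa : ∀ a ∈ Gn n, ψ a = θi a := by
      intro a ha; funext b; simp only [hψ, if_pos (Or.inl ha)]
    have Wψ : IsWiredUnitFlow G (Gn n) v ψ := by
      refine ⟨?_, ?_, ?_, ?_, ?_⟩
      · intro a b
        by_cases h : a ∈ Gn n ∨ b ∈ Gn n
        · simp only [hψ, if_pos h, if_pos h.symm]; exact ianti a b
        · simp only [hψ, if_neg h, if_neg (fun hh => h (Or.symm hh))]; ring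
      · intro a b hab
        simp only [hψ]; split_ifs with h
        · exact iadj0 a b hab
        · rfl
      · intro a b ha hb
        simp only [hψ]; rw [if_neg]; push_neg; exact ⟨ha, hb⟩
      · intro a ha hav
        rw [hψa a ha]; exact idiv a hav
      · rw [hψa v hv]; exact idivv
    -- eFun abbreviations
    set en : V × V → ℝ := fun p => (Fn n : ∀ _ : V × V, ℝ) p with hen
    set eψ : V × V → ℝ := fun p => eFun G c ψ p with heψ
    set d : V × V → ℝ := fun p => eψ p - en p with hd
    obtain ⟨t, ht⟩ := hsupp n
    have Sen : Summable fun p => en p ^ 2 := lp_sq_summable (Fn n)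
    have SG : Summable fun p => Gv p ^ 2 := lp_sq_summable Gv
    have heψG : ∀ p, eψ p = Gv p ∨ eψ p = 0 := by
      intro p
      rw [heψ, hGv]
      unfold eFun
      by_cases h : G.Adj p.1 p.2
      · simp only [if_pos h, hψ]
        by_cases h2 : p.1 ∈ Gn n ∨ p.2 ∈ Gn n
        · left; rw [if_pos h2]
        · right; rw [if_neg h2, zero_div]
      · right; simp only [if_neg h]
    have heψ2 : ∀ p, en p ≠ 0 → eψ p = Gv p := by
      intro p hz
      simp only [hen] at hz
      rw [hFn n p] at hz
      unfold eFun at hz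
      by_cases hadj : G.Adj p.1 p.2
      · rw [if_pos hadj] at hz
        have hθnne : θn p.1 p.2 ≠ 0 := by
          intro h0; rw [hθn] at h0; rw [h0, zero_div] at hz; exact hz rfl
        have hcond : p.1 ∈ Gn n ∨ p.2 ∈ Gn n := by
          by_contra hcc
          push_neg at hcc
          exact hθnne (hout _ _ hcc.1 hcc.2)
        simp only [heψ, hGv p]
        unfold eFun
        rw [if_pos hadj, if_pos hadj]
        simp only [hψ, if_pos hcond]
      · exact absurd (if_neg hadj) (fun hh => hz hh)
    have Seψ : Summable fun p => eψ p ^ 2 := by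
      refine Summable.of_nonneg_of_le (fun p => sq_nonneg _) (fun p => ?_) SG
      rcases heψG p with h | h
      · rw [h]
      · rw [h]; simpa using sq_nonneg ((Gv : ∀ _ : V × V, ℝ) p)
    have Smul : ∀ f : V × V → ℝ, Summable fun p => en p * f p := by
      intro f
      refine summable_of_ne_finset_zero (s := t) fun p hp => ?_
      rw [hen]; simp only; rw [ht p hp, zero_mul]
    have Sd2 : Summable fun p => d p ^ 2 := by
      refine (((Seψ.sub ((Smul eψ).mul_left 2)).add Sen).congr fun p => ?_)
      rw [hd]; ring
    -- quadratic inequality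
    have hq : ∀ t' : ℝ, 0 ≤ 2 * t' * (∑' p, en p * d p) + t' ^ 2 * (∑' p, d p ^ 2) := by
      intro t'
      set χ : V → V → ℝ := fun a b => θn a b + t' * (ψ a b - θn a b) with hχ
      have Wχ : IsWiredUnitFlow G (Gn n) v χ := by
        obtain ⟨panti, padj0, pout, pdiv, pdivv⟩ := Wψ
        refine ⟨?_, ?_, ?_, ?_, ?_⟩
        · intro a b; simp only [hχ]; rw [hanti a b, panti a b]; ring
        · intro a b hab; simp only [hχ]; rw [hadj0 a b hab, padj0 a b hab]; ring
        · intro a b ha hb; simp only [hχ]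
          rw [hout a b ha hb, pout a b ha hb]; ring
        · intro a ha hav
          have h1 := hdiv a ha hav
          have h2 := pdiv a ha hav
          have h3 := h1.add ((h2.sub h1).mul_left t')
          simpa using h3
        · have h3 := hdivv.add ((pdivv.sub hdivv).mul_left t')
          simpa using h3
      have hE := hmin χ Wχ
      rw [energyR_eq G c hc, energyR_eq G c hc] at hE
      have hEχ : ∀ p, eFun G c χ p ^ 2
          = en p ^ 2 + (2 * t' * (en p * d p) + t' ^ 2 * d p ^ 2) := by
        intro p
        rw [hχ]
        rw [eFun_lin G c θn ψ t' p]
        have h1 : eFun G c θn p = en p := (hFn n p).symm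
        have h2 : eFun G c ψ p = eψ p := rfl
        rw [h1, h2, hd]; ring
      rw [tsum_congr hEχ] at hE
      rw [Summable.tsum_add Sen (((Smul d).mul_left (2 * t')).add (Sd2.mul_left (t' ^ 2)))] at hE
      rw [Summable.tsum_add ((Smul d).mul_left (2 * t')) (Sd2.mul_left (t' ^ 2))] at hE
      rw [tsum_mul_left, tsum_mul_left] at hE
      have hL : ∑' (p : V × V), eFun G c θn p ^ 2 = ∑' p, en p ^ 2 :=
        tsum_congr fun p => by rw [← hFn n p]
      rw [hL] at hE
      linarith
    -- conclude B = 0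
    have hC : 0 ≤ ∑' p, d p ^ 2 := tsum_nonneg fun p => sq_nonneg _
    set B := ∑' p, en p * d p with hB
    set C := ∑' p, d p ^ 2 with hCdef
    have hB0 : B = 0 := by
      rcases eq_or_lt_of_le hC with h | h
      · have h1 := hq 1
        have h2 := hq (-1)
        rw [← h] at h1 h2
        nlinarith
      · have h1 := hq (-(B / C))
        have hne : C ≠ 0 := ne_of_gt h
        have heq2 : 2 * -(B / C) * B + (-(B / C)) ^ 2 * C = -(B ^ 2 / C) := by
          field_simp; ring
        rw [heq2] at h1
        have hB2 : B ^ 2 ≤ 0 := by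
          have h4 := (neg_nonneg.1 h1)
          calc B ^ 2 = (B ^ 2 / C) * C := by field_simp
            _ ≤ 0 := mul_nonpos_of_nonpos_of_nonneg h4 h.le
        have h5 : B ^ 2 = 0 := le_antisymm hB2 (sq_nonneg B)
        exact pow_eq_zero_iff (n := 2) (by norm_num) |>.1 h5
    -- turn B = 0 into the inner product identity
    have hsplit : B = (∑' p, en p * eψ p) - ∑' p, en p ^ 2 := by
      rw [hB, ← Summable.tsum_sub (Smul eψ) Sen]
      exact tsum_congr fun p => by rw [hd]; ring
    have hψg : ∀ p, en p * eψ p = en p * Gv p := by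
      intro p
      by_cases hz : en p = 0
      · rw [hz, zero_mul, zero_mul]
      · rw [heψ2 p hz]
    have hfin : ∑' p, en p * Gv p = ∑' p, en p ^ 2 := by
      rw [← tsum_congr hψg]
      rw [hsplit] at hB0
      linarith
    rw [← lp_tsum_mul (Fn n) Gv, ← lp_tsum_sq (Fn n)]
    exact hfin
  -- norms are bounded by ‖Gv‖
  have hnorm_le : ∀ n, v ∈ Gn n → ‖Fn n‖ ≤ ‖Gv‖ := by
    intro n hv
    have h := inner_eq n hv
    have h2 := real_inner_le_norm (Fn n) Gv
    nlinarith [norm_nonneg (Fn n), norm_nonneg Gv]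
  have hev : ∀ᶠ n in atTop, v ∈ Gn n := by
    have hv : v ∈ ⋃ n, ((Gn n : Finset V) : Set V) := hcover ▸ Set.mem_univ v
    obtain ⟨N, hN⟩ := Set.mem_iUnion.1 hv
    exact eventually_atTop.2 ⟨N, fun n hn => hmono hn hN⟩
  -- convergence of energies via Fatou-type argument
  have SG : Summable fun p => Gv p ^ 2 := lp_sq_summable Gv
  have hA : Tendsto (fun n => ‖Fn n‖ ^ 2) atTop (nhds (‖Gv‖ ^ 2)) := by
    rw [← lp_tsum_sq Gv]
    refine tendsto_order.2 ⟨?_, ?_⟩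
    · intro b hb
      obtain ⟨s, hs⟩ := (SG.hasSum.eventually (eventually_gt_nhds hb)).exists
      have hfin : Tendsto (fun n => ∑ p ∈ s, ((Fn n : ∀ _ : V × V, ℝ) p) ^ 2) atTop
          (nhds (∑ p ∈ s, (Gv p) ^ 2)) :=
        tendsto_finset_sum _ fun p _ => (hpt p).pow 2
      filter_upwards [hfin.eventually (eventually_gt_nhds hs)] with n hn
      calc b < ∑ p ∈ s, ((Fn n : ∀ _ : V × V, ℝ) p) ^ 2 := hn
        _ ≤ ∑' p, ((Fn n : ∀ _ : V × V, ℝ) p) ^ 2 :=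
            Summable.sum_le_tsum s (fun p _ => sq_nonneg _) (lp_sq_summable (Fn n))
        _ = ‖Fn n‖ ^ 2 := lp_tsum_sq (Fn n)
    · intro b hb
      rw [lp_tsum_sq Gv] at hb
      filter_upwards [hev] with n hv
      exact lt_of_le_of_lt (pow_le_pow_left₀ (norm_nonneg _) (hnorm_le n hv) 2) hb
  have hdist : Tendsto (fun n => ‖Fn n - Gv‖ ^ 2) atTop (nhds 0) := by
    have heq : ∀ᶠ n in atTop, ‖Gv‖ ^ 2 - ‖Fn n‖ ^ 2 = ‖Fn n - Gv‖ ^ 2 := by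
      filter_upwards [hev] with n hv
      have h1 := norm_sub_sq_real (Fn n) Gv
      have h2 := inner_eq n hv
      rw [h2] at h1
      linarith
    have h3 : Tendsto (fun n => ‖Gv‖ ^ 2 - ‖Fn n‖ ^ 2) atTop (nhds 0) := by
      have := tendsto_const_nhds (x := ‖Gv‖ ^ 2) (f := atTop (α := ℕ)) |>.sub hA
      simpa using this
    exact h3.congr' heq
  have hdist1 : Tendsto (fun n => ‖Fn n - Gv‖) atTop (nhds 0) := by
    have h4 : Tendsto (fun n => Real.sqrt (‖Fn n - Gv‖ ^ 2)) atTop (nhds (Real.sqrt 0)) :=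
      (Real.continuous_sqrt.tendsto 0).comp hdist
    rw [Real.sqrt_zero] at h4
    refine h4.congr fun n => Real.sqrt_sq (norm_nonneg _)
  rw [tendsto_iff_norm_sub_tendsto_zero]
  exact hdist1

/-- on a transient network exhausted by finite subgraphs `G_n`,
the wired unit current flows `θ_{v,n} = −∇g_{v,n}` (the energy minimizers in
`G_n^W`) converge in energy to `θ_v = −∇g_v`, where `g_{v,n} → g_v`
pointwise; in particular energies and inner products converge. -/
theorem wired_currents_converge_in_energy
    (G : SimpleGraph V) (hG : G.Connected) [G.LocallyFinite]
    (c : V → V → ℝ) (hc : ∀ a b, G.Adj a b → 0 < c a b)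
    (hcsymm : ∀ a b, c a b = c b a)
    (Gn : ℕ → Finset V) (hmono : Monotone Gn)
    (hcover : (⋃ n, ((Gn n : Finset V) : Set V)) = Set.univ)
    (v u : V)
    (gv gu : V → ℝ) (gvn gun : ℕ → V → ℝ)
    (hgv : ∀ x, Tendsto (fun n => gvn n x) atTop (nhds (gv x)))
    (hgu : ∀ x, Tendsto (fun n => gun n x) atTop (nhds (gu x)))
    (hθv : IsUnitFlowToInfinity G v (gradFlow G c gv))
    (hθu : IsUnitFlowToInfinity G u (gradFlow G c gu))
    (hEv : Summable fun p : V × V =>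
      if G.Adj p.1 p.2 then (gradFlow G c gv) p.1 p.2 ^ 2 / c p.1 p.2 else 0)
    (hEu : Summable fun p : V × V =>
      if G.Adj p.1 p.2 then (gradFlow G c gu) p.1 p.2 ^ 2 / c p.1 p.2 else 0)
    (hwv : ∀ n, IsWiredUnitFlow G (Gn n) v (gradFlow G c (gvn n)) ∧
      ∀ ψ, IsWiredUnitFlow G (Gn n) v ψ →
        energyR G c (gradFlow G c (gvn n)) ≤ energyR G c ψ)
    (hwu : ∀ n, IsWiredUnitFlow G (Gn n) u (gradFlow G c (gun n)) ∧
      ∀ ψ, IsWiredUnitFlow G (Gn n) u ψ →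
        energyR G c (gradFlow G c (gun n)) ≤ energyR G c ψ) :
    Tendsto (fun n => energyR G c
        (fun a b => gradFlow G c (gvn n) a b - gradFlow G c gv a b)) atTop (nhds 0) ∧
    Tendsto (fun n => energyR G c (gradFlow G c (gvn n))) atTop
      (nhds (energyR G c (gradFlow G c gv))) ∧
    Tendsto (fun n => innerR G c (gradFlow G c (gvn n)) (gradFlow G c (gun n))) atTop
      (nhds (innerR G c (gradFlow G c gv) (gradFlow G c gu))) := by
  classical
  have memv : Memℓp (eFun G c (gradFlow G c gv)) 2 :=
    memℓp_of_sq_summable _ (hEv.congr fun p => eFun_sq G c hc _ p)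
  have memu : Memℓp (eFun G c (gradFlow G c gu)) 2 :=
    memℓp_of_sq_summable _ (hEu.congr fun p => eFun_sq G c hc _ p)
  have memn : ∀ (g : ℕ → V → ℝ) (w : V) (n : ℕ),
      IsWiredUnitFlow G (Gn n) w (gradFlow G c (g n)) →
      Memℓp (eFun G c (gradFlow G c (g n))) 2 := by
    intro g w n hw
    obtain ⟨t, ht⟩ := wired_support G (Gn n) _ hw.2.1 hw.2.2.1
    refine memℓp_of_sq_summable _ (summable_of_ne_finset_zero (s := t) fun p hp => ?_)
    unfold eFun
    split_ifs with h
    · rw [ht p hp, zero_div]; ring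
    · ring
  set Fv : ℕ → lp (fun _ : V × V => ℝ) 2 :=
    fun n => ⟨eFun G c (gradFlow G c (gvn n)), memn gvn v n (hwv n).1⟩ with hFv
  set Fu : ℕ → lp (fun _ : V × V => ℝ) 2 :=
    fun n => ⟨eFun G c (gradFlow G c (gun n)), memn gun u n (hwu n).1⟩ with hFu
  set Gve : lp (fun _ : V × V => ℝ) 2 := ⟨eFun G c (gradFlow G c gv), memv⟩ with hGve
  set Gue : lp (fun _ : V × V => ℝ) 2 := ⟨eFun G c (gradFlow G c gu), memu⟩ with hGue
  have hkv : Tendsto Fv atTop (nhds Gve) :=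
    key G c hc Gn hmono hcover v gv gvn hgv hθv hwv Fv Gve (fun n p => rfl) (fun p => rfl)
  have hku : Tendsto Fu atTop (nhds Gue) :=
    key G c hc Gn hmono hcover u gu gun hgu hθu hwu Fu Gue (fun n p => rfl) (fun p => rfl)
  have energy_lp : ∀ (θ : V → V → ℝ) (F : lp (fun _ : V × V => ℝ) 2),
      (∀ p, F p = eFun G c θ p) → energyR G c θ = (1 / 2) * ‖F‖ ^ 2 := by
    intro θ F hF
    rw [energyR_eq G c hc]
    congr 1
    rw [← lp_tsum_sq F]
    exact tsum_congr fun p => by rw [hF p]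
  have inner_lp : ∀ (θ φ : V → V → ℝ) (F Φ : lp (fun _ : V × V => ℝ) 2),
      (∀ p, F p = eFun G c θ p) → (∀ p, Φ p = eFun G c φ p) →
      innerR G c θ φ = (1 / 2) * (inner ℝ F Φ : ℝ) := by
    intro θ φ F Φ hF hΦ
    rw [innerR_eq G c hc]
    congr 1
    rw [← lp_tsum_mul F Φ]
    exact tsum_congr fun p => by rw [hF p, hΦ p]
  refine ⟨?_, ?_, ?_⟩
  · have h0 : Tendsto (fun n => ‖Fv n - Gve‖) atTop (nhds 0) :=
      tendsto_iff_norm_sub_tendsto_zero.mp hkv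
    have h1 : Tendsto (fun n => (1 / 2 : ℝ) * ‖Fv n - Gve‖ ^ 2) atTop
        (nhds ((1 / 2) * 0 ^ 2)) := (h0.pow 2).const_mul _
    norm_num at h1
    refine h1.congr fun n => ?_
    refine (energy_lp _ (Fv n - Gve) fun p => ?_).symm
    rw [lp.coeFn_sub, Pi.sub_apply, eFun_sub]
  · have h1 : Tendsto (fun n => (1 / 2 : ℝ) * ‖Fv n‖ ^ 2) atTop
        (nhds ((1 / 2) * ‖Gve‖ ^ 2)) := (hkv.norm.pow 2).const_mul _
    rw [← energy_lp _ Gve fun p => rfl] at h1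
    refine h1.congr fun n => (energy_lp _ (Fv n) fun p => rfl).symm
  · have h1 : Tendsto (fun n => (1 / 2 : ℝ) * (inner ℝ (Fv n) (Fu n) : ℝ)) atTop
        (nhds ((1 / 2) * (inner ℝ Gve Gue : ℝ))) := (hkv.inner hku).const_mul _
    rw [← inner_lp _ _ Gve Gue (fun p => rfl) (fun p => rfl)] at h1
    refine h1.congr fun n =>
      (inner_lp _ _ (Fv n) (Fu n) (fun p => rfl) (fun p => rfl)).symm

end
end
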